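/- For m ≥ 0, removing any single m-dimensional subcube from Q_{m+2} leaves a connected graph of diameter at most m+2, and since the number of antipodal pairs 2^{m+1} exceeds the number 2^m of removed vertices, the diameter of the remaining graph is exactly m+2. Hence the Q_m-subcube fault diameter of Q_{m+2} is m+2. -/

import Mathlib

open SimpleGraph

/-- The `n`-dimensional hypercube: vertices are `Fin n → Bool`,
adjacent iff Hamming distance is `1`. -/
def Q (n : ℕ) : SimpleGraph (Fin n → Bool) where
  Adj u v := hammingDist u v = 1
  symm := ⟨fun u v (h : hammingDist u v = 1) => (hammingDist_comm v u).trans h⟩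
  loopless := ⟨fun u (h : hammingDist u u = 1) => by simp [hammingDist_self] at h⟩

/-- Flip the `i`-th bit of `x`. -/
def flipBit {n : ℕ} (x : Fin n → Bool) (i : Fin n) : Fin n → Bool :=
  Function.update x i (!x i)

/-- `S` is a subcube of dimension exactly `m` (fixing `n - m` coordinates). -/
def IsSubcube {n : ℕ} (m : ℕ) (S : Set (Fin n → Bool)) : Prop :=
  ∃ A : Finset (Fin n), A.card = n - m ∧ ∃ p : Fin n → Bool,
    S = {x | ∀ i ∈ A, x i = p i}

/-- `S` is a subcube of dimension at most `m` (fixing at least `n - m` coordinates). -/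
def IsSubcubeLe {n : ℕ} (m : ℕ) (S : Set (Fin n → Bool)) : Prop :=
  ∃ A : Finset (Fin n), n - m ≤ A.card ∧ ∃ p : Fin n → Bool,
    S = {x | ∀ i ∈ A, x i = p i}

/-!
Removing a subcube `S` from `Q n` preserves distances. For `u, v ∉ S` pick a coordinate `j` fixed
by `S` at which `v` disagrees with the value prescribed by `S`. If `u j = v j`, the subcube spanned
by `u` and `v` misses `S` and contains a geodesic from `u` to `v`; otherwise flipping `u` at `j` is
a step towards `v` after which this is the case. So in `Q (m + 2) - S` the distance is the Hamming
distance, at most `m + 2`, and it equals `m + 2` on an antipodal pair outside `S`, which exists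
because `S` fixes two coordinates.
-/

section

variable {n : ℕ}

lemma Q_adj_iff {x y : Fin n → Bool} : (Q n).Adj x y ↔ hammingDist x y = 1 := Iff.rfl

lemma flipBit_apply_self (x : Fin n → Bool) (i : Fin n) : flipBit x i i = !x i :=
  Function.update_self ..

lemma flipBit_apply_of_ne (x : Fin n → Bool) {i j : Fin n} (h : j ≠ i) : flipBit x i j = x j :=
  Function.update_of_ne h ..

lemma flipBit_apply_self_of_ne {x y : Fin n → Bool} {i : Fin n} (h : x i ≠ y i) :
    flipBit x i i = y i := by
  rw [flipBit_apply_self]; exact (Bool.eq_not.mpr (Ne.symm h)).symm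

lemma hammingDist_flipBit_add_one {x y : Fin n → Bool} {i : Fin n} (h : x i ≠ y i) :
    hammingDist (flipBit x i) y + 1 = hammingDist x y := by
  have hfilter : ({j | flipBit x i j ≠ y j} : Finset (Fin n)) =
      ({j | x j ≠ y j} : Finset (Fin n)).erase i := by
    ext j
    rcases eq_or_ne j i with rfl | hj
    · simp [flipBit_apply_self_of_ne h]
    · simp [flipBit_apply_of_ne x hj, hj]
  rw [hammingDist, hammingDist, hfilter, Finset.card_erase_add_one (by simpa using h)]

lemma Q_adj_flipBit (x : Fin n → Bool) (i : Fin n) : (Q n).Adj x (flipBit x i) := by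
  have := hammingDist_flipBit_add_one (x := x) (y := flipBit x i) (i := i)
    (by simp [flipBit_apply_self])
  rwa [hammingDist_self, zero_add, eq_comm] at this

lemma hammingDist_not (x : Fin n → Bool) : hammingDist x (fun i => !x i) = n := by
  rw [hammingDist]
  simp

lemma hammingDist_le_length {x y : Fin n → Bool} (w : (Q n).Walk x y) :
    hammingDist x y ≤ w.length := by
  induction w with
  | nil => simp
  | @cons x z y h _ ih =>
    rw [Walk.length_cons]
    linarith [hammingDist_triangle x z y, Q_adj_iff.mp h]

/-- The smallest subcube containing `x` and `y`. -/
def spannedSubcube (x y : Fin n → Bool) : Set (Fin n → Bool) :=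
  {z | ∀ i, x i = y i → z i = x i}

lemma exists_walk_induce_length_eq_hammingDist {T : Set (Fin n → Bool)} (u v : T)
    (hT : spannedSubcube u.1 v.1 ⊆ T) :
    ∃ w : ((Q n).induce T).Walk u v, w.length = hammingDist u.1 v.1 := by
  obtain ⟨k, hk⟩ : ∃ k, hammingDist u.1 v.1 = k := ⟨_, rfl⟩
  induction k generalizing u with
  | zero =>
    obtain rfl := Subtype.ext (hammingDist_eq_zero.mp hk)
    exact ⟨.nil, hk.symm⟩
  | succ k ih =>
    have huv : u.1 ≠ v.1 := hammingDist_ne_zero.mp (by omega)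
    obtain ⟨i, hi⟩ := Function.ne_iff.mp huv
    have hsub : spannedSubcube (flipBit u.1 i) v.1 ⊆ spannedSubcube u.1 v.1 := by
      intro z hz j hj
      have hji : j ≠ i := by rintro rfl; exact hi hj
      rw [hz j (by rwa [flipBit_apply_of_ne _ hji]), flipBit_apply_of_ne _ hji]
    have hu' : flipBit u.1 i ∈ T := hT (hsub fun _ _ => rfl)
    obtain ⟨w, hw⟩ := ih ⟨_, hu'⟩ (hsub.trans hT)
      (Nat.add_right_cancel ((hammingDist_flipBit_add_one hi).trans hk))
    exact ⟨.cons (induce_adj.mpr (Q_adj_flipBit u.1 i)) w, by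
      rw [Walk.length_cons, hw]; exact hammingDist_flipBit_add_one hi⟩

def subcube (A : Finset (Fin n)) (p : Fin n → Bool) : Set (Fin n → Bool) :=
  {x | ∀ i ∈ A, x i = p i}

lemma spannedSubcube_subset_compl_subcube {A : Finset (Fin n)} {p x y : Fin n → Bool} {j : Fin n}
    (hj : j ∈ A) (hxy : x j = y j) (hy : y j ≠ p j) :
    spannedSubcube x y ⊆ (subcube A p)ᶜ :=
  fun _ hz hzS => hy (hxy ▸ hz j hxy ▸ hzS j hj)

lemma exists_walk_compl_subcube_length_eq_hammingDist (A : Finset (Fin n)) (p : Fin n → Bool)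
    (u v : ↥(subcube A p)ᶜ) :
    ∃ w : ((Q n).induce (subcube A p)ᶜ).Walk u v, w.length = hammingDist u.1 v.1 := by
  obtain ⟨j, hjA, hvj⟩ : ∃ j ∈ A, v.1 j ≠ p j := by
    by_contra! h; exact v.2 h
  by_cases huv : u.1 j = v.1 j
  · exact exists_walk_induce_length_eq_hammingDist u v
      (spannedSubcube_subset_compl_subcube hjA huv hvj)
  · have hspan := spannedSubcube_subset_compl_subcube hjA (flipBit_apply_self_of_ne huv) hvj
    obtain ⟨w, hw⟩ :=
      exists_walk_induce_length_eq_hammingDist ⟨_, hspan fun _ _ => rfl⟩ v hspan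
    refine ⟨.cons (induce_adj.mpr (Q_adj_flipBit u.1 j)) w, ?_⟩
    rw [Walk.length_cons, hw, hammingDist_flipBit_add_one huv]

theorem dist_induce_compl_subcube (A : Finset (Fin n)) (p : Fin n → Bool)
    (u v : ↥(subcube A p)ᶜ) :
    ((Q n).induce (subcube A p)ᶜ).dist u v = hammingDist u.1 v.1 := by
  obtain ⟨w, hw⟩ := exists_walk_compl_subcube_length_eq_hammingDist A p u v
  obtain ⟨w', hw'⟩ := (Walk.reachable w).exists_walk_length_eq_dist
  refine le_antisymm (hw ▸ dist_le w) ?_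
  calc hammingDist u.1 v.1 ≤ (w'.map (Embedding.induce _).toHom).length := hammingDist_le_length _
    _ = _ := by rw [Walk.length_map, hw']

theorem connected_induce_compl_subcube {A : Finset (Fin n)} (hA : A.Nonempty)
    (p : Fin n → Bool) : ((Q n).induce (subcube A p)ᶜ).Connected := by
  obtain ⟨i, hi⟩ := hA
  have hp : flipBit p i ∉ subcube A p := fun h => by simpa [flipBit_apply_self] using h i hi
  refine (connected_iff _).mpr ⟨fun u v => ?_, ⟨⟨_, hp⟩⟩⟩
  obtain ⟨w, -⟩ := exists_walk_compl_subcube_length_eq_hammingDist A p u v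
  exact w.reachable

lemma exists_antipodal_compl_subcube {A : Finset (Fin n)} (hA : 1 < A.card) (p : Fin n → Bool) :
    ∃ x ∉ subcube A p, (fun i => !x i) ∉ subcube A p := by
  obtain ⟨i, hi, j, hj, hij⟩ := Finset.one_lt_card.mp hA
  refine ⟨flipBit p i, fun h => ?_, fun h => ?_⟩
  · simpa [flipBit_apply_self] using h i hi
  · simpa [flipBit_apply_of_ne p (Ne.symm hij)] using h j hj

end

theorem subcube_fault_diameter_mplus2 (m : ℕ) (S : Set (Fin (m + 2) → Bool))
    (hS : IsSubcube m S) :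
    ((Q (m + 2)).induce Sᶜ).Connected ∧
    (∀ x y, ((Q (m + 2)).induce Sᶜ).dist x y ≤ m + 2) ∧
    ∃ x y, ((Q (m + 2)).induce Sᶜ).dist x y = m + 2 := by
  obtain ⟨A, hA, p, hSA⟩ := hS
  obtain rfl : S = subcube A p := hSA
  have hA2 : A.card = 2 := by omega
  refine ⟨connected_induce_compl_subcube (Finset.card_pos.mp (by omega : 0 < A.card)) p,
    fun u v => ?_, ?_⟩
  · rw [dist_induce_compl_subcube]
    simpa using hammingDist_le_card_fintype (x := u.1) (y := v.1)
  · obtain ⟨x, hx, hx'⟩ := exists_antipodal_compl_subcube (by omega : 1 < A.card) p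
    exact ⟨⟨x, hx⟩, ⟨_, hx'⟩, by rw [dist_induce_compl_subcube, hammingDist_not]⟩
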